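/- For every integer k ≥ 1, the Reeve simplex P_k = conv{(0,0,0), (1,0,0), (0,1,0), (1,1,k)} ⊆ ℝ^3 contains exactly 4 lattice points (namely its vertices) and has Euclidean volume k/6, i.e. normalized volume k. In particular, the number of lattice points of a lattice polytope does not bound its volume. -/

import Mathlib

/-!
The Reeve simplex `P_k` is the image of the order simplex `{0 ≤ t₀ ≤ t₁ ≤ t₂ ≤ 1}` under the
linear map `t ↦ (t₀ - t₁ + t₂, t₁, k t₀)`, which sends the vertices `0, e₂, e₁ + e₂, e₀ + e₁ + e₂`
to those of `P_k` and has determinant `-k`. The order simplex has volume `1/3!`, since its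
images under the permutations of the coordinates cover the unit cube and overlap only where
two coordinates agree; hence `vol P_k = k/6`. A lattice point of `P_k` comes from a point `t`
of the order simplex with `t₁ ∈ ℤ` and `t₀ - t₁ + t₂ ∈ ℤ`, which forces `t₁ ∈ {0, 1}` and then
`t` to be a vertex.
-/

open Set MeasureTheory
open scoped ENNReal

/-- A point of `ℝ^3` is a lattice point if all coordinates are integers. -/
def IsLatticePoint (x : Fin 3 → ℝ) : Prop := ∀ i, ∃ z : ℤ, x i = (z : ℝ)

/-- The set of lattice points of `ℝ^3`. -/
def LatticePts : Set (Fin 3 → ℝ) := {x | IsLatticePoint x}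

/-- The Reeve simplex: conv{(0,0,0), (1,0,0), (0,1,0), (1,1,k)}. -/
noncomputable def reeveSimplex (k : ℕ) : Set (Fin 3 → ℝ) :=
  convexHull ℝ {![0, 0, 0], ![1, 0, 0], ![0, 1, 0], ![1, 1, (k : ℝ)]}

theorem volume_setOf_apply_eq_apply {ι : Type*} [Fintype ι] {i j : ι} (hij : i ≠ j) :
    volume {x : ι → ℝ | x i = x j} = 0 := by
  classical
  let f : (ι → ℝ) →ₗ[ℝ] ℝ := .proj i - .proj j
  have hker : {x : ι → ℝ | x i = x j} = LinearMap.ker f := by ext; simp [f, sub_eq_zero]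
  rw [hker]
  refine Measure.addHaar_submodule _ _ fun htop => ?_
  have : Pi.single i 1 ∈ LinearMap.ker f := htop ▸ Submodule.mem_top
  simp [f, hij] at this

theorem volume_setOf_not_injective {ι : Type*} [Fintype ι] :
    volume {x : ι → ℝ | ¬ x.Injective} = 0 := by
  have : {x : ι → ℝ | ¬ x.Injective} = ⋃ i, ⋃ j, ⋃ (_ : i ≠ j), {x | x i = x j} := by
    ext x; simp [Function.Injective, and_comm]
  rw [this]
  exact measure_iUnion_null fun i => measure_iUnion_null fun j =>
    measure_iUnion_null volume_setOf_apply_eq_apply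

theorem measurePreserving_comp_perm {n : ℕ} (σ : Equiv.Perm (Fin n)) :
    MeasurePreserving (fun x : Fin n → ℝ => x ∘ σ) volume volume := by
  convert volume_measurePreserving_piCongrLeft (fun _ : Fin n => ℝ) σ.symm using 1
  ext x i
  simp [MeasurableEquiv.coe_piCongrLeft, Equiv.piCongrLeft_apply_eq_cast]

def orderSimplex (n : ℕ) : Set (Fin n → ℝ) := {x | Monotone x} ∩ Icc 0 1

theorem measurableSet_orderSimplex (n : ℕ) : MeasurableSet (orderSimplex n) :=
  (isClosed_monotone.inter isClosed_Icc).measurableSet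

theorem convex_orderSimplex (n : ℕ) : Convex ℝ (orderSimplex n) := by
  refine Convex.inter (fun x hx y hy a b ha hb _ i j hij => ?_) (convex_Icc 0 1)
  simp only [Pi.add_apply, Pi.smul_apply, smul_eq_mul]
  gcongr
  exacts [hx hij, hy hij]

theorem comp_perm_mem_orderSimplex {n : ℕ} {σ : Equiv.Perm (Fin n)} {x : Fin n → ℝ} :
    x ∘ σ ∈ orderSimplex n ↔ Monotone (x ∘ σ) ∧ x ∈ Icc 0 1 := by
  simp only [orderSimplex, mem_inter_iff, mem_ofPred_eq, mem_Icc, Pi.le_def, Function.comp_apply,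
    Pi.zero_apply, Pi.one_apply]
  exact and_congr_right' (and_congr (σ.forall_congr_right (q := (0 ≤ x ·)))
    (σ.forall_congr_right (q := (x · ≤ 1))))

theorem iUnion_preimage_comp_perm_orderSimplex (n : ℕ) :
    ⋃ σ : Equiv.Perm (Fin n), (fun x : Fin n → ℝ => x ∘ σ) ⁻¹' orderSimplex n = Icc 0 1 := by
  ext x
  simp only [mem_iUnion, mem_preimage, comp_perm_mem_orderSimplex]
  exact ⟨fun ⟨_, _, hx⟩ => hx, fun hx => ⟨Tuple.sort x, Tuple.monotone_sort x, hx⟩⟩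

theorem volume_orderSimplex (n : ℕ) : volume (orderSimplex n) = (n.factorial : ℝ≥0∞)⁻¹ := by
  have hdisj : Pairwise (Function.onFun (AEDisjoint volume)
      fun σ : Equiv.Perm (Fin n) => (fun x : Fin n → ℝ => x ∘ σ) ⁻¹' orderSimplex n) := by
    intro σ τ hστ
    refine measure_mono_null ?_ volume_setOf_not_injective
    rintro x ⟨hσ, hτ⟩ hinj
    exact hστ <| Equiv.ext fun i => hinj (congrFun (Tuple.unique_monotone
      (comp_perm_mem_orderSimplex.1 hσ).1 (comp_perm_mem_orderSimplex.1 hτ).1) i)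
  have hsum : volume (Icc (0 : Fin n → ℝ) 1) = n.factorial * volume (orderSimplex n) := by
    rw [← iUnion_preimage_comp_perm_orderSimplex, measure_iUnion₀ hdisj
      fun σ => ((measurableSet_orderSimplex n).preimage
        (measurePreserving_comp_perm σ).measurable).nullMeasurableSet, tsum_fintype]
    simp only [fun σ => (measurePreserving_comp_perm σ).measure_preimage
      (measurableSet_orderSimplex n).nullMeasurableSet, Finset.sum_const, Finset.card_univ,
      Fintype.card_perm, Fintype.card_fin, nsmul_eq_mul]
  rw [Real.volume_Icc_pi] at hsum
  simp only [Pi.one_apply, Pi.zero_apply, sub_zero, ENNReal.ofReal_one,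
    Finset.prod_const_one] at hsum
  exact ENNReal.eq_inv_of_mul_eq_one_left ((mul_comm _ _).trans hsum.symm)

theorem mem_orderSimplex_three {x : Fin 3 → ℝ} :
    x ∈ orderSimplex 3 ↔ 0 ≤ x 0 ∧ x 0 ≤ x 1 ∧ x 1 ≤ x 2 ∧ x 2 ≤ 1 := by
  refine ⟨fun ⟨hmono, hlo, hhi⟩ => ⟨hlo 0, hmono (by decide), hmono (by decide), hhi 2⟩,
    fun ⟨h0, h01, h12, h2⟩ => ⟨Fin.monotone_iff_le_succ.2 fun i => ?_, fun i => ?_, fun i => ?_⟩⟩ <;>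
    fin_cases i <;> simp <;> linarith

theorem convexHull_eq_orderSimplex_three :
    convexHull ℝ {![0, 0, 0], ![0, 0, 1], ![0, 1, 1], ![1, 1, 1]} = orderSimplex 3 := by
  refine (convexHull_min ?_ (convex_orderSimplex 3)).antisymm fun x hx => ?_
  · rintro v (rfl | rfl | rfl | rfl) <;> simp [mem_orderSimplex_three]
  obtain ⟨h0, h01, h12, h2⟩ := mem_orderSimplex_three.1 hx
  have hmem := (convex_convexHull ℝ {![0, 0, 0], ![0, 0, 1], ![0, 1, 1], ![1, 1, 1]}).sum_mem
    (t := Finset.univ) (w := ![1 - x 2, x 2 - x 1, x 1 - x 0, x 0])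
    (z := ![![0, 0, 0], ![0, 0, 1], ![0, 1, 1], (![1, 1, 1] : Fin 3 → ℝ)]) ?_ ?_ ?_
  · convert hmem
    ext i; fin_cases i <;> simp [Fin.sum_univ_four]
  · intro i _; fin_cases i <;> simp <;> linarith
  · simp [Fin.sum_univ_four]
  · intro i _; fin_cases i <;> exact subset_convexHull ℝ _ (by simp)

noncomputable def reeveMap (k : ℕ) : (Fin 3 → ℝ) →ₗ[ℝ] (Fin 3 → ℝ) :=
  Matrix.toLin' !![1, -1, 1; 0, 1, 0; (k : ℝ), 0, 0]

theorem reeveMap_apply (k : ℕ) (t : Fin 3 → ℝ) :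
    reeveMap k t = ![t 0 - t 1 + t 2, t 1, k * t 0] := by
  ext i
  fin_cases i <;> simp [reeveMap, Matrix.mulVec, dotProduct, Fin.sum_univ_three, sub_eq_add_neg]

theorem det_reeveMap (k : ℕ) : LinearMap.det (reeveMap k) = -k := by
  simp [reeveMap, LinearMap.det_toLin', Matrix.det_fin_three]

theorem reeveSimplex_eq_image (k : ℕ) : reeveSimplex k = reeveMap k '' orderSimplex 3 := by
  rw [← convexHull_eq_orderSimplex_three, LinearMap.image_convexHull]
  simp [image_insert_eq, reeveMap_apply, reeveSimplex]

theorem volume_reeveSimplex (k : ℕ) : volume (reeveSimplex k) = ENNReal.ofReal (k / 6) := by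
  rw [reeveSimplex_eq_image, Measure.addHaar_image_linearMap, det_reeveMap, volume_orderSimplex,
    abs_neg, Nat.abs_cast, ENNReal.ofReal_div_of_pos (by norm_num), div_eq_mul_inv]
  simp [Nat.factorial]

theorem intCast_vec_mem_latticePts (a b c : ℤ) : ![(a : ℝ), b, c] ∈ LatticePts := by
  intro i
  fin_cases i
  exacts [⟨a, rfl⟩, ⟨b, rfl⟩, ⟨c, rfl⟩]

theorem eq_zero_or_eq_one_of_intCast {a : ℝ} (ha : ∃ z : ℤ, a = z) (h0 : 0 ≤ a) (h1 : a ≤ 1) :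
    a = 0 ∨ a = 1 := by
  obtain ⟨z, rfl⟩ := ha
  obtain rfl | rfl : z = 0 ∨ z = 1 := by
    have : 0 ≤ z ∧ z ≤ 1 := ⟨by exact_mod_cast h0, by exact_mod_cast h1⟩
    omega
  all_goals simp

theorem reeveSimplex_inter_latticePts (k : ℕ) :
    reeveSimplex k ∩ LatticePts = {![0, 0, 0], ![1, 0, 0], ![0, 1, 0], ![1, 1, (k : ℝ)]} := by
  refine Subset.antisymm ?_ ?_
  · rintro _ ⟨hx, hlat⟩
    rw [reeveSimplex_eq_image] at hx
    obtain ⟨t, ht, rfl⟩ := hx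
    obtain ⟨h0, h01, h12, h2⟩ := mem_orderSimplex_three.1 ht
    have hlat0 : ∃ z : ℤ, t 0 - t 1 + t 2 = z := by simpa [reeveMap_apply] using hlat 0
    have hlat1 : ∃ z : ℤ, t 1 = z := by simpa [reeveMap_apply] using hlat 1
    rw [reeveMap_apply]
    obtain ht1 | ht1 := eq_zero_or_eq_one_of_intCast hlat1 (by linarith) (by linarith)
    · have ht0 : t 0 = 0 := by linarith
      obtain ht2 | ht2 := eq_zero_or_eq_one_of_intCast (a := t 2)
        (by simpa [ht0, ht1] using hlat0) (by linarith) h2 <;> simp [ht0, ht1, ht2]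
    · have ht2 : t 2 = 1 := by linarith
      obtain ht0 | ht0 := eq_zero_or_eq_one_of_intCast (a := t 0)
        (by simpa [ht1, ht2] using hlat0) h0 (by linarith) <;> simp [ht0, ht1, ht2]
  · rintro v (rfl | rfl | rfl | rfl) <;> refine ⟨subset_convexHull ℝ _ (by simp), ?_⟩
    · simpa using intCast_vec_mem_latticePts 0 0 0
    · simpa using intCast_vec_mem_latticePts 1 0 0
    · simpa using intCast_vec_mem_latticePts 0 1 0
    · simpa using intCast_vec_mem_latticePts 1 1 k

theorem reeve_simplex_lattice_points_and_volume_general (k : ℕ) :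
    reeveSimplex k ∩ LatticePts =
      ({![0, 0, 0], ![1, 0, 0], ![0, 1, 0], ![1, 1, (k : ℝ)]} : Set (Fin 3 → ℝ)) ∧
    (reeveSimplex k ∩ LatticePts).ncard = 4 ∧
    volume (reeveSimplex k) = ENNReal.ofReal ((k : ℝ) / 6) := by
  refine ⟨reeveSimplex_inter_latticePts k, ?_, volume_reeveSimplex k⟩
  rw [reeveSimplex_inter_latticePts, ncard_insert_of_notMem, ncard_insert_of_notMem, ncard_pair]
    <;> simp

/-- For every k ≥ 1 the Reeve simplex P_k contains exactly 4 lattice points, namely its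
vertices, and has Euclidean volume k/6, i.e. normalized volume k. -/
theorem reeve_simplex_lattice_points_and_volume (k : ℕ) (hk : 1 ≤ k) :
    reeveSimplex k ∩ LatticePts =
      ({![0, 0, 0], ![1, 0, 0], ![0, 1, 0], ![1, 1, (k : ℝ)]} : Set (Fin 3 → ℝ)) ∧
    (reeveSimplex k ∩ LatticePts).ncard = 4 ∧
    volume (reeveSimplex k) = ENNReal.ofReal ((k : ℝ) / 6) :=
  reeve_simplex_lattice_points_and_volume_general k
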